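/- For any a > 0 and c ∈ ℝ, the Sturm-Liouville operator L_c[f](x) = -(d/dx)(x·(d/dx)f) + x(x+c)f applied to the scaled Laguerre function h_k^a satisfies: L_c[h_k^a] = (1/(4a²))·(4k(k-1)·h_{k-2}^a + k(a³-4ac-16k)·h_{k-1}^a + (8+a³+4ac+24k+2a³k+8ack+24k²)·h_k^a + (k+1)(a³-4ac-16(k+1))·h_{k+1}^a + 4(k+1)(k+2)·h_{k+2}^a), where negative-index terms vanish. -/

import Mathlib

/-!
Multiplication by `a x` and the Euler operator `x d/dx` both act on the family `h_n^a` by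
three-term recurrences inherited from the Laguerre polynomials. Differentiating the Euler
recurrence once more and using `(h_{n+1}^a)' = (h_n^a)' - (a/2)(h_n^a + h_{n+1}^a)`, the
derivative terms cancel and one gets the Laguerre ODE `(x (h_n^a)')' = (a/4)(a x - 4n - 2) h_n^a`.
Hence `L_c` acts on `h_k^a` as multiplication by `x² + (c - a²/4) x + a(2k+1)/2`, which is
expanded by applying the recurrence for `a x` twice.
-/

/-- The Laguerre polynomials, defined by the three-term recurrence
`L_{k+1}(x) = ((2k+1-x)L_k(x) - k L_{k-1}(x))/(k+1)`, `L_0 = 1`, `L_1 = 1 - x`. -/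
noncomputable def laguerre : ℕ → ℝ → ℝ
  | 0, _ => 1
  | 1, x => 1 - x
  | (n + 2), x =>
      ((2 * (n : ℝ) + 3 - x) * laguerre (n + 1) x - ((n : ℝ) + 1) * laguerre n x)
        / ((n : ℝ) + 2)

/-- The scaled Laguerre functions `h_n^a(x) = √a · e^{-ax/2} · L_n(ax)`. -/
noncomputable def scaledLaguerre (a : ℝ) (n : ℕ) (x : ℝ) : ℝ :=
  Real.sqrt a * Real.exp (-a * x / 2) * laguerre n (a * x)

/-- The Sturm–Liouville operator `L_c[f](x) = -(d/dx)(x·(d/dx)f) + x(x+c)f`. -/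
noncomputable def sturmLiouvilleAiry (c : ℝ) (f : ℝ → ℝ) (x : ℝ) : ℝ :=
  -(deriv (fun t => t * deriv f t) x) + x * (x + c) * f x

open Real

theorem laguerre_recurrence (n : ℕ) (y : ℝ) :
    ((n : ℝ) + 1) * laguerre (n + 1) y
      = (2 * n + 1 - y) * laguerre n y - n * laguerre (n - 1) y := by
  rcases n with _ | n
  · simp [laguerre]
  · have : (n : ℝ) + 2 ≠ 0 := by positivity
    simp only [laguerre, Nat.add_sub_cancel]
    push_cast
    field_simp
    ring

theorem differentiable_laguerre : ∀ n : ℕ, Differentiable ℝ (laguerre n)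
  | 0 => by simp [laguerre]
  | 1 => by
    change Differentiable ℝ fun x => 1 - x
    fun_prop
  | n + 2 => by
    have := differentiable_laguerre n
    have := differentiable_laguerre (n + 1)
    change Differentiable ℝ fun x =>
      ((2 * (n : ℝ) + 3 - x) * laguerre (n + 1) x - ((n : ℝ) + 1) * laguerre n x)
        / ((n : ℝ) + 2)
    fun_prop

theorem hasDerivAt_laguerre_add_two (n : ℕ) (y : ℝ) :
    HasDerivAt (laguerre (n + 2))
      (((2 * n + 3 - y) * deriv (laguerre (n + 1)) y - laguerre (n + 1) y
        - (n + 1) * deriv (laguerre n) y) / (n + 2)) y := by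
  have hL (m : ℕ) := (differentiable_laguerre m y).hasDerivAt
  change HasDerivAt (fun x =>
    ((2 * (n : ℝ) + 3 - x) * laguerre (n + 1) x - ((n : ℝ) + 1) * laguerre n x)
      / ((n : ℝ) + 2)) _ y
  exact (((((hasDerivAt_id' y).const_sub _).mul (hL (n + 1))).sub
    ((hL n).const_mul _)).div_const _).congr_deriv (by ring)

-- Each of the two recurrences needs the other in its induction step.
theorem deriv_laguerre_succ_and_mul_deriv_laguerre_succ (n : ℕ) (y : ℝ) :
    deriv (laguerre (n + 1)) y = deriv (laguerre n) y - laguerre n y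
      ∧ y * deriv (laguerre (n + 1)) y = (n + 1) * (laguerre (n + 1) y - laguerre n y) := by
  induction n with
  | zero => simp [laguerre]
  | succ m ih =>
    obtain ⟨hderiv, hmul⟩ := ih
    have hm : (m : ℝ) + 2 ≠ 0 := by positivity
    have hrec := laguerre_recurrence (m + 1) y
    simp only [Nat.add_sub_cancel] at hrec
    have hderiv' :
        deriv (laguerre (m + 2)) y = deriv (laguerre (m + 1)) y - laguerre (m + 1) y := by
      rw [(hasDerivAt_laguerre_add_two m y).deriv, div_eq_iff hm]
      linear_combination ((m : ℝ) + 1) * hderiv - hmul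
    refine ⟨hderiv', ?_⟩
    rw [hderiv']
    push_cast at hrec ⊢
    linear_combination hmul - hrec

theorem deriv_laguerre_succ (n : ℕ) (y : ℝ) :
    deriv (laguerre (n + 1)) y = deriv (laguerre n) y - laguerre n y :=
  (deriv_laguerre_succ_and_mul_deriv_laguerre_succ n y).1

theorem mul_deriv_laguerre (n : ℕ) (y : ℝ) :
    y * deriv (laguerre n) y = n * (laguerre n y - laguerre (n - 1) y) := by
  rcases n with _ | n
  · simp [laguerre]
  · simpa using (deriv_laguerre_succ_and_mul_deriv_laguerre_succ n y).2

section ScaledLaguerre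

variable (a : ℝ)

theorem mul_scaledLaguerre (n : ℕ) (x : ℝ) :
    a * x * scaledLaguerre a n x
      = (2 * n + 1) * scaledLaguerre a n x - n * scaledLaguerre a (n - 1) x
        - (n + 1) * scaledLaguerre a (n + 1) x := by
  simp only [scaledLaguerre]
  linear_combination √a * exp (-a * x / 2) * laguerre_recurrence n (a * x)

theorem hasDerivAt_scaledLaguerre (n : ℕ) (x : ℝ) :
    HasDerivAt (scaledLaguerre a n)
      (√a * exp (-a * x / 2) * (a * deriv (laguerre n) (a * x) - a / 2 * laguerre n (a * x)))
      x := by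
  have hexp : HasDerivAt (fun t => exp (-a * t / 2)) (exp (-a * x / 2) * (-a / 2)) x := by
    simpa using (((hasDerivAt_id x).const_mul (-a)).div_const 2).exp
  have hL : HasDerivAt (fun t => laguerre n (a * t)) (deriv (laguerre n) (a * x) * a) x :=
    (differentiable_laguerre n (a * x)).hasDerivAt.comp x
      (by simpa using (hasDerivAt_id x).const_mul a)
  have hfun : scaledLaguerre a n = fun t => √a * (exp (-a * t / 2) * laguerre n (a * t)) := by
    funext t
    rw [scaledLaguerre, mul_assoc]
  rw [hfun]
  exact ((hexp.mul hL).const_mul √a).congr_deriv (by ring)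

theorem deriv_scaledLaguerre_succ (n : ℕ) (x : ℝ) :
    deriv (scaledLaguerre a (n + 1)) x
      = deriv (scaledLaguerre a n) x
        - a / 2 * (scaledLaguerre a n x + scaledLaguerre a (n + 1) x) := by
  simp only [(hasDerivAt_scaledLaguerre a _ x).deriv, scaledLaguerre]
  linear_combination √a * exp (-a * x / 2) * a * deriv_laguerre_succ n (a * x)

theorem mul_deriv_scaledLaguerre (n : ℕ) (x : ℝ) :
    x * deriv (scaledLaguerre a n) x
      = (n + 1) / 2 * scaledLaguerre a (n + 1) x - 1 / 2 * scaledLaguerre a n x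
        - n / 2 * scaledLaguerre a (n - 1) x := by
  rw [(hasDerivAt_scaledLaguerre a n x).deriv]
  have hrec := mul_scaledLaguerre a n x
  simp only [scaledLaguerre] at hrec ⊢
  linear_combination √a * exp (-a * x / 2) * mul_deriv_laguerre n (a * x) - hrec / 2

theorem hasDerivAt_mul_deriv_scaledLaguerre (n : ℕ) (x : ℝ) :
    HasDerivAt (fun t => t * deriv (scaledLaguerre a n) t)
      (a / 4 * (a * x - 4 * n - 2) * scaledLaguerre a n x) x := by
  have hh (m : ℕ) := (hasDerivAt_scaledLaguerre a m x).differentiableAt.hasDerivAt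
  have hcomb := (((hh (n + 1)).const_mul (((n : ℝ) + 1) / 2)).sub ((hh n).const_mul (1 / 2))).sub
    ((hh (n - 1)).const_mul ((n : ℝ) / 2))
  rw [funext (mul_deriv_scaledLaguerre a n)]
  refine hcomb.congr_deriv ?_
  have hpred : (n : ℝ) * deriv (scaledLaguerre a (n - 1)) x
      = n * (deriv (scaledLaguerre a n) x
        + a / 2 * (scaledLaguerre a (n - 1) x + scaledLaguerre a n x)) := by
    rcases n with _ | n
    · simp
    · rw [Nat.add_sub_cancel, deriv_scaledLaguerre_succ]
      ring
  linear_combination ((n : ℝ) + 1) / 2 * deriv_scaledLaguerre_succ a n x - hpred / 2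
    - a / 4 * mul_scaledLaguerre a n x

theorem sq_mul_scaledLaguerre (k : ℕ) (x : ℝ) :
    (a * x) ^ 2 * scaledLaguerre a k x
      = k * (k - 1) * scaledLaguerre a (k - 2) x - 4 * k ^ 2 * scaledLaguerre a (k - 1) x
        + (6 * k ^ 2 + 6 * k + 2) * scaledLaguerre a k x
        - 4 * (k + 1) ^ 2 * scaledLaguerre a (k + 1) x
        + (k + 1) * (k + 2) * scaledLaguerre a (k + 2) x := by
  have hk := mul_scaledLaguerre a k x
  have hk1 := mul_scaledLaguerre a (k + 1) x
  have hpred : (k : ℝ) * (a * x * scaledLaguerre a (k - 1) x)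
      = k * ((2 * k - 1) * scaledLaguerre a (k - 1) x - (k - 1) * scaledLaguerre a (k - 2) x
        - k * scaledLaguerre a k x) := by
    rcases k with _ | k
    · simp
    · rw [mul_scaledLaguerre, Nat.add_sub_cancel, Nat.add_sub_add_right]
      push_cast
      ring
  push_cast at hk1
  linear_combination (a * x + 2 * k + 1) * hk - hpred - ((k : ℝ) + 1) * hk1

end ScaledLaguerre

/-- for `a > 0`, `c ∈ ℝ` and `k : ℕ`, the Sturm–Liouville operator `L_c`
applied to the scaled Laguerre function `h_k^a` satisfies
`L_c[h_k^a] = (1/(4a²))·(4k(k-1)·h_{k-2}^a + k(a³-4ac-16k)·h_{k-1}^a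
  + (8+a³+4ac+24k+2a³k+8ack+24k²)·h_k^a + (k+1)(a³-4ac-16(k+1))·h_{k+1}^a
  + 4(k+1)(k+2)·h_{k+2}^a)`, where negative-index terms vanish (zero coefficients). -/
theorem sturmLiouville_scaledLaguerre (a c : ℝ) (ha : 0 < a) (k : ℕ) :
    ∀ x ∈ Set.Ici (0:ℝ),
      sturmLiouvilleAiry c (scaledLaguerre a k) x
        = (1 / (4 * a ^ 2)) * (4 * (k : ℝ) * ((k : ℝ) - 1) * scaledLaguerre a (k - 2) x
            + (k : ℝ) * (a ^ 3 - 4 * a * c - 16 * (k : ℝ)) * scaledLaguerre a (k - 1) x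
            + (8 + a ^ 3 + 4 * a * c + 24 * (k : ℝ) + 2 * a ^ 3 * (k : ℝ)
                + 8 * a * c * (k : ℝ) + 24 * (k : ℝ) ^ 2) * scaledLaguerre a k x
            + ((k : ℝ) + 1) * (a ^ 3 - 4 * a * c - 16 * ((k : ℝ) + 1))
                * scaledLaguerre a (k + 1) x
            + 4 * ((k : ℝ) + 1) * ((k : ℝ) + 2) * scaledLaguerre a (k + 2) x) := by
  intro x _
  rw [sturmLiouvilleAiry, (hasDerivAt_mul_deriv_scaledLaguerre a k x).deriv,
    one_div_mul_eq_div, eq_div_iff (by positivity)]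
  linear_combination 4 * sq_mul_scaledLaguerre a k x
    + (4 * a * c - a ^ 3) * mul_scaledLaguerre a k x
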